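/- arXiv:1005.4199 — 3 statements merged into one kernel-verified Lean document; each statement's English description precedes it below -/
import Mathlib

section
/- For n ≥ 4, if a family of positive real numbers Y_i(u) (i = 1,…,n-2, u ∈ ℤ) satisfies the reduced SG Y-system 𝕐_n(RSG), then Y_i(u + 4n - 2) = Y_i(u) for all i and u. -/
/-!
Choose `t` with `t (u - 1) * t (u + 1) = 1 + Y_{n-2}(u)⁻¹` and solve
`V (σ + 2) + V (σ - 2) = t σ • V σ` in `ℝ²`; the transfer matrices lie in `SL₂(ℝ)`, so
`det (V σ, V (σ + 2)) = 1`. The minors `T_i(u) = det (V (u - n + i), V (u + n - i))` then satisfy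
the T-system (Plücker relations), and the local relations of `𝕐_n(RSG)` force
`Y_i⁻¹ = T_{i-1} T_{i+1}` for `2 ≤ i ≤ n - 2` and `(1 + Y_1)⁻¹ = T_0 T_2 + 1`. The long-range
relation for `Y_1` telescopes into `det (V σ, V (σ + 4n - 2)) = 0`, so
`V (σ + 4n - 2) = μ σ • V σ` with `μ σ * μ (σ + 2) = 1`; hence the products `T_{i-1} T_{i+1}`,
and with them all `Y_i`, are `(4n - 2)`-periodic.
-/

open Finset

theorem Int.exists_seq_add_one {α : Type*} (e : ℤ → α ≃ α) (a : α) :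
    ∃ x : ℤ → α, x 0 = a ∧ ∀ k, x (k + 1) = e k (x k) := by
  let E : Equiv.Perm (ℤ × α) :=
    { toFun := fun p => (p.1 + 1, e p.1 p.2)
      invFun := fun p => (p.1 - 1, (e (p.1 - 1)).symm p.2)
      left_inv := fun p => by simp
      right_inv := fun p => by simp }
  have hfst (k : ℤ) (p : ℤ × α) : ((E ^ k) p).1 = p.1 + k := by
    induction k using Int.induction_on generalizing p with
    | zero => simp
    | succ k ih => rw [zpow_add_one, Equiv.Perm.mul_apply, ih]; simp [E]; ring
    | pred k ih => rw [zpow_sub_one, Equiv.Perm.mul_apply, ih]; simp [E]; ring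
  refine ⟨fun k => ((E ^ k) (0, a)).2, by simp, fun k => ?_⟩
  simp only [add_comm k 1, zpow_one_add, Equiv.Perm.mul_apply]
  show e ((E ^ k) (0, a)).1 ((E ^ k) (0, a)).2 = e k ((E ^ k) (0, a)).2
  rw [hfst, zero_add]

theorem Int.exists_seq_add_two {α : Type*} (e : ℤ → α ≃ α) (a b : α) :
    ∃ x : ℤ → α, x 0 = a ∧ x 1 = b ∧ ∀ k, x (k + 2) = e k (x k) := by
  obtain ⟨s, hs0, hs⟩ := Int.exists_seq_add_one
    (fun k => (Equiv.prodComm α α).trans ((Equiv.refl α).prodCongr (e k))) (a, b)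
  refine ⟨fun k => (s k).1, by simp [hs0], by simpa [hs0] using congrArg Prod.fst (hs 0),
    fun k => ?_⟩
  show (s (k + 2)).1 = e k (s k).1
  rw [← one_add_one_eq_two, ← add_assoc, hs, hs]
  rfl

theorem exists_mul_shift_eq {G : Type*} [CommGroup G] (q : ℤ → G) :
    ∃ t : ℤ → G, ∀ u, t (u - 1) * t (u + 1) = q u := by
  obtain ⟨t, -, -, ht⟩ := Int.exists_seq_add_two
    (fun k => (Equiv.inv G).trans (Equiv.mulLeft (q (k + 1)))) 1 1
  refine ⟨t, fun u => ?_⟩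
  have := ht (u - 1)
  simp only [sub_add_cancel, Equiv.trans_apply, Equiv.inv_apply, Equiv.coe_mulLeft] at this
  rw [show u + 1 = u - 1 + 2 by ring, this, mul_inv_cancel_comm_assoc]

def IsTSystem (T : ℤ → ℤ → ℝ) : Prop :=
  ∀ i u, T i (u - 1) * T i (u + 1) = T (i - 1) u * T (i + 1) u + 1

-- the value of `1 + Y_i(v)` in the Y-system attached to `T`
noncomputable def crossRatio (T : ℤ → ℤ → ℝ) (i v : ℤ) : ℝ :=
  T i (v - 1) * T i (v + 1) / (T (i - 1) v * T (i + 1) v)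

namespace IsTSystem

variable {T : ℤ → ℤ → ℝ}

theorem mul_eq_of_Y_node (hT : IsTSystem T) {i : ℤ} {y a c : ℤ → ℝ}
    (hi : ∀ u, T i (u - 1) * T i (u + 1) = 1 + (y u)⁻¹)
    (hsucc : ∀ u, T (i + 1) (u - 1) * T (i + 1) (u + 1) = a u) (ha : ∀ u, a u ≠ 0)
    (hy : ∀ u, y (u - 1) * y (u + 1) = 1 / (a u * c u)) (u : ℤ) :
    T (i - 1) (u - 1) * T (i - 1) (u + 1) = c u := by
  have hinv (v : ℤ) : T (i - 1) v * T (i + 1) v = (y v)⁻¹ := by linarith [hT i v, hi v]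
  refine mul_left_cancel₀ (ha u) ?_
  calc a u * (T (i - 1) (u - 1) * T (i - 1) (u + 1))
      = (T (i - 1) (u - 1) * T (i + 1) (u - 1)) * (T (i - 1) (u + 1) * T (i + 1) (u + 1)) := by
        rw [← hsucc]; ring
    _ = (y (u - 1) * y (u + 1))⁻¹ := by rw [hinv, hinv, mul_inv]
    _ = a u * c u := by rw [hy, one_div, inv_inv]

theorem mul_eq_of_Y_system (hT : IsTSystem T) {N : ℤ} {b y : ℤ → ℤ → ℝ}
    (htop : ∀ u, T (N - 1) (u - 1) * T (N - 1) (u + 1) = b (N - 1) u)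
    (hnext : ∀ u, T (N - 2) (u - 1) * T (N - 2) (u + 1) = b (N - 2) u)
    (hb : ∀ i u, 2 ≤ i → i ≤ N - 2 → b (i + 1) u ≠ 0)
    (hby : ∀ i u, 2 ≤ i → i ≤ N - 2 → b i u = 1 + (y i u)⁻¹)
    (hy : ∀ i u, 2 ≤ i → i ≤ N - 2 → y i (u - 1) * y i (u + 1) = 1 / (b (i + 1) u * b (i - 1) u))
    (i : ℤ) (hi1 : 1 ≤ i) (hiN : i ≤ N - 1) (u : ℤ) :
    T i (u - 1) * T i (u + 1) = b i u := by
  have key : ∀ i ≤ N - 2, 1 ≤ i → (∀ u, T i (u - 1) * T i (u + 1) = b i u) ∧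
      ∀ u, T (i + 1) (u - 1) * T (i + 1) (u + 1) = b (i + 1) u := by
    refine Int.leInductionDown
      (fun _ => ⟨hnext, fun u => by rw [show N - 2 + 1 = N - 1 by ring]; exact htop u⟩) ?_
    intro i hi ih hi1
    obtain ⟨hcur, -⟩ := ih (by omega)
    refine ⟨hT.mul_eq_of_Y_node (fun u => (hcur u).trans (hby i u (by omega) hi)) (ih (by omega)).2
      (fun u => hb i u (by omega) hi) (hy i · (by omega) hi), by simpa using hcur⟩
  rcases eq_or_lt_of_le hiN with rfl | hlt
  · exact htop u
  · exact (key i (by omega) hi1).1 u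

theorem crossRatio_eq_one_add (hT : IsTSystem T) {i v : ℤ} {y : ℝ} (hy : y ≠ 0)
    (h : T i (v - 1) * T i (v + 1) = 1 + y⁻¹) : crossRatio T i v = 1 + y := by
  rw [crossRatio, h, show T (i - 1) v * T (i + 1) v = y⁻¹ by linarith [hT i v]]
  field_simp
  ring

theorem crossRatio_eq_neg_inv (hT : IsTSystem T) {i v : ℤ} {y : ℝ} (hy : y ≠ 0)
    (hy' : 1 + y ≠ 0) (h : T i (v - 1) * T i (v + 1) = (1 + y)⁻¹) :
    crossRatio T i v = -y⁻¹ := by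
  rw [crossRatio, h, show T (i - 1) v * T (i + 1) v = (1 + y)⁻¹ - 1 by linarith [hT i v],
    show (1 + y)⁻¹ - 1 = -y * (1 + y)⁻¹ by field_simp; ring]
  field_simp

end IsTSystem

theorem prod_crossRatio {T : ℤ → ℤ → ℝ} {N a : ℤ} (u : ℤ) (htop : ∀ v, T (N - 1) v = 1)
    (ha : a ≤ N - 1) (hne : ∀ i v, a - 1 ≤ i → i ≤ N - 2 → T i v ≠ 0) :
    ∏ i ∈ Icc a (N - 2), crossRatio T i (u - N + i) * crossRatio T i (u + N - i) =
      T (N - 2) (u - 1) * T (N - 2) (u + 1) * (T a (u - N + a - 1) * T a (u + N - a + 1) /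
        (T (a - 1) (u - N + a) * T (a - 1) (u + N - a))) := by
  induction a, ha using Int.leInductionDown with
  | base =>
    rw [Icc_eq_empty (by omega), prod_empty, htop, htop]
    have h1 := hne (N - 2) (u - 1) (by omega) le_rfl
    have h2 := hne (N - 2) (u + 1) (by omega) le_rfl
    rw [show N - 1 - 1 = N - 2 by ring, show u - N + (N - 1) = u - 1 by ring,
      show u + N - (N - 1) = u + 1 by ring]
    field_simp
  | pred a ha ih =>
    have hIcc : Icc (a - 1) (N - 2) = insert (a - 1) (Icc a (N - 2)) := by
      ext; simp only [mem_Icc, mem_insert]; omega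
    rw [hIcc, prod_insert (by simp), ih (fun i v h1 h2 => hne i v (by omega) h2)]
    rw [show u - N + (a - 1) = u - N + a - 1 by ring, show u + N - (a - 1) = u + N - a + 1 by ring]
    have hne' (i v : ℤ) (h1 : a - 1 ≤ i) (h2 : i ≤ N - 1) : T i v ≠ 0 := by
      rcases eq_or_lt_of_le h2 with rfl | h2
      · simp [htop]
      · exact hne i v (by omega) (by omega)
    have hl := hne' (a - 1) (u - N + a) le_rfl (by omega)
    have hr := hne' (a - 1) (u + N - a) le_rfl (by omega)
    have hl' := hne' a (u - N + a - 1) (by omega) ha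
    have hr' := hne' a (u + N - a + 1) (by omega) ha
    generalize u - N + a = l at *
    generalize u + N - a = r at *
    simp only [crossRatio, sub_add_cancel, add_sub_cancel_right]
    field_simp

def wedge (v w : Fin 2 → ℝ) : ℝ := v 0 * w 1 - v 1 * w 0

theorem wedge_plucker (a b c d : Fin 2 → ℝ) :
    wedge a b * wedge c d - wedge a c * wedge b d + wedge a d * wedge b c = 0 := by
  simp only [wedge]; ring

theorem wedge_smul_eq (u v w : Fin 2 → ℝ) : wedge u v • w = wedge w v • u + wedge u w • v := by
  ext i; fin_cases i <;> simp [wedge] <;> ring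

theorem wedge_smul_smul (a b : ℝ) (v w : Fin 2 → ℝ) :
    wedge (a • v) (b • w) = a * b * wedge v w := by
  simp only [wedge, Pi.smul_apply, smul_eq_mul]; ring

open Matrix in
theorem exists_wedge_add_two_eq_one (t : ℤ → ℝ) : ∃ V : ℤ → Fin 2 → ℝ,
    (∀ σ, wedge (V σ) (V (σ + 2)) = 1) ∧ ∀ σ, wedge (V (σ - 2)) (V (σ + 2)) = t σ := by
  let g (k : ℤ) : SpecialLinearGroup (Fin 2) ℝ := ⟨!![0, 1; -1, t (k + 2)], by simp [det_fin_two]⟩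
  obtain ⟨x, -, -, hx⟩ := Int.exists_seq_add_two (fun k => Equiv.mulLeft (g k)) 1 1
  replace hx (k : ℤ) : x (k + 2) = g k * x k := hx k
  -- the rows of `x σ` are `V σ` and `V (σ + 2)`
  have hrow (σ : ℤ) (j : Fin 2) :
      x (σ + 2) 0 j = x σ 1 j ∧ x (σ + 2) 1 j = t (σ + 2) * x σ 1 j - x σ 0 j := by
    simp only [hx, Matrix.SpecialLinearGroup.coe_mul]
    simp [g, mul_apply, Fin.sum_univ_two]
    ring
  have hdet (σ : ℤ) := (x σ).det_coe
  simp only [det_fin_two] at hdet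
  refine ⟨fun σ => x σ 0, fun σ => ?_, fun σ => ?_⟩
  · simp only [wedge, hrow, hdet]
  · obtain ⟨ρ, rfl⟩ : ∃ ρ, σ = ρ + 2 := ⟨σ - 2, by ring⟩
    simp only [add_sub_cancel_right, wedge, hrow]
    linear_combination t (ρ + 2) * hdet ρ

def tau (V : ℤ → Fin 2 → ℝ) (N i u : ℤ) : ℝ := wedge (V (u - N + i)) (V (u + N - i))

section Unimodular

variable {V : ℤ → Fin 2 → ℝ}

theorem tau_sub_one (hV : ∀ σ, wedge (V σ) (V (σ + 2)) = 1) (N u : ℤ) :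
    tau V N (N - 1) u = 1 := by
  rw [tau, ← hV (u - N + (N - 1))]; ring_nf

theorem tau_sub_two (V : ℤ → Fin 2 → ℝ) (N u : ℤ) :
    tau V N (N - 2) u = wedge (V (u - 2)) (V (u + 2)) := by
  rw [tau]; congr 2 <;> ring

theorem isTSystem_tau (hV : ∀ σ, wedge (V σ) (V (σ + 2)) = 1) (N : ℤ) :
    IsTSystem (tau V N) := by
  intro i u
  have h := wedge_plucker (V (u - 1 - N + i)) (V (u + 1 - N + i)) (V (u - 1 + N - i))
    (V (u + 1 + N - i))
  rw [show u + 1 - N + i = u - 1 - N + i + 2 by ring, hV,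
    show u + 1 + N - i = u - 1 + N - i + 2 by ring, hV] at h
  simp only [tau]
  ring_nf at h ⊢
  linarith

theorem wedge_eq_tau_zero_mul_sub (hV : ∀ σ, wedge (V σ) (V (σ + 2)) = 1) (N u : ℤ) :
    wedge (V (u - 2 * N + 1)) (V (u + 2 * N - 1)) =
      tau V N 0 (u - N + 1) * tau V N 0 (u + N - 1) - tau V N 1 (u - N) * tau V N 1 (u + N) := by
  have h := wedge_plucker (V (u - 2 * N + 1)) (V (u - 1)) (V (u + 1)) (V (u + 2 * N - 1))
  rw [show u + 1 = u - 1 + 2 by ring, hV] at h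
  simp only [tau]
  ring_nf at h ⊢
  linarith

theorem exists_smul_of_wedge_eq_zero (hV : ∀ σ, wedge (V σ) (V (σ + 2)) = 1) {p : ℤ}
    (h0 : ∀ σ, wedge (V σ) (V (σ + p)) = 0) :
    ∃ μ : ℤ → ℝ, (∀ σ, V (σ + p) = μ σ • V σ) ∧ ∀ σ, μ σ * μ (σ + 2) = 1 := by
  obtain ⟨μ, hμ⟩ : ∃ μ : ℤ → ℝ, ∀ σ, V (σ + p) = μ σ • V σ :=
    ⟨_, fun σ => by simpa [hV, h0] using wedge_smul_eq (V σ) (V (σ + 2)) (V (σ + p))⟩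
  refine ⟨μ, hμ, fun σ => ?_⟩
  have h := hV (σ + p)
  rwa [show σ + p + 2 = σ + 2 + p by ring, hμ, hμ, wedge_smul_smul, hV, mul_one] at h

theorem tau_mul_tau_add_period (hV : ∀ σ, wedge (V σ) (V (σ + 2)) = 1) {p : ℤ}
    (h0 : ∀ σ, wedge (V σ) (V (σ + p)) = 0) (N i u : ℤ) :
    tau V N (i - 1) (u + p) * tau V N (i + 1) (u + p) =
      tau V N (i - 1) u * tau V N (i + 1) u := by
  obtain ⟨μ, hVμ, hμ⟩ := exists_smul_of_wedge_eq_zero hV h0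
  simp only [tau]
  rw [show u + p - N + (i - 1) = u - N + (i - 1) + p by ring,
    show u + p + N - (i - 1) = u + N - (i + 1) + 2 + p by ring,
    show u + p - N + (i + 1) = u - N + (i - 1) + 2 + p by ring,
    show u + p + N - (i + 1) = u + N - (i + 1) + p by ring,
    show u + N - (i - 1) = u + N - (i + 1) + 2 by ring,
    show u - N + (i + 1) = u - N + (i - 1) + 2 by ring]
  generalize u - N + (i - 1) = a
  generalize u + N - (i + 1) = b
  simp only [hVμ, wedge_smul_smul]
  calc μ a * μ (b + 2) * wedge (V a) (V (b + 2)) * (μ (a + 2) * μ b * wedge (V (a + 2)) (V b))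
      = (μ a * μ (a + 2)) * (μ b * μ (b + 2)) *
          (wedge (V a) (V (b + 2)) * wedge (V (a + 2)) (V b)) := by ring
    _ = wedge (V a) (V (b + 2)) * wedge (V (a + 2)) (V b) := by rw [hμ, hμ, one_mul, one_mul]

end Unimodular

structure IsRSGYSystem (n : ℕ) (Y : ℤ → ℤ → ℝ) : Prop where
  pos : ∀ i u : ℤ, 1 ≤ i → i ≤ (n : ℤ) - 2 → 0 < Y i u
  node_one : ∀ u : ℤ, Y 1 (u - ((n : ℤ) - 1)) * Y 1 (u + ((n : ℤ) - 1)) =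
    (∏ j ∈ Finset.Icc (2 : ℤ) ((n : ℤ) - 2),
      (1 + Y j (u - (n : ℤ) + j)) * (1 + Y j (u + (n : ℤ) - j))) /
    (1 + (Y ((n : ℤ) - 2) u)⁻¹)
  node_two : ∀ u : ℤ, Y 2 (u - 1) * Y 2 (u + 1) =
    if n = 4 then 1 + Y 1 u else (1 + Y 1 u) / (1 + (Y 3 u)⁻¹)
  node_mid : ∀ i u : ℤ, 3 ≤ i → i ≤ (n : ℤ) - 3 → Y i (u - 1) * Y i (u + 1) =
    1 / ((1 + (Y (i - 1) u)⁻¹) * (1 + (Y (i + 1) u)⁻¹))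
  node_last : ∀ u : ℤ, 5 ≤ n → Y ((n : ℤ) - 2) (u - 1) * Y ((n : ℤ) - 2) (u + 1) =
    1 / (1 + (Y ((n : ℤ) - 3) u)⁻¹)

-- the value of `T i (u - 1) * T i (u + 1)` dictated by `𝕐_n(RSG)`, including the boundary row
-- `n - 1` and the reduced node `1`
noncomputable def tauSq (n : ℕ) (Y : ℤ → ℤ → ℝ) (i u : ℤ) : ℝ :=
  if i = (n : ℤ) - 1 then 1 else if i = 1 then (1 + Y 1 u)⁻¹ else 1 + (Y i u)⁻¹

section tauSq

variable {n : ℕ} {Y : ℤ → ℤ → ℝ} {i u : ℤ}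

theorem tauSq_top : tauSq n Y ((n : ℤ) - 1) u = 1 := if_pos rfl

theorem tauSq_one (hn : 3 ≤ n) : tauSq n Y 1 u = (1 + Y 1 u)⁻¹ := by
  simp [tauSq, show (1 : ℤ) ≠ (n : ℤ) - 1 by omega]

theorem tauSq_of_two_le (hi : 2 ≤ i) (hin : i ≤ (n : ℤ) - 2) : tauSq n Y i u = 1 + (Y i u)⁻¹ := by
  simp only [tauSq, if_neg (show i ≠ (n : ℤ) - 1 by omega), if_neg (show i ≠ 1 by omega)]

end tauSq

namespace IsRSGYSystem

variable {n : ℕ} {Y : ℤ → ℤ → ℝ} {T : ℤ → ℤ → ℝ}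

theorem Y_mul_Y_eq (hY : IsRSGYSystem n Y) (hn : 4 ≤ n) (i u : ℤ) (hi : 2 ≤ i)
    (hin : i ≤ (n : ℤ) - 2) :
    Y i (u - 1) * Y i (u + 1) = 1 / (tauSq n Y (i + 1) u * tauSq n Y (i - 1) u) := by
  by_cases hi2 : i = 2
  · subst hi2
    rw [hY.node_two u, show (2 : ℤ) - 1 = 1 by norm_num, tauSq_one (by omega)]
    split_ifs with hn4
    · simp [tauSq, hn4]
    · rw [show (2 : ℤ) + 1 = 3 by norm_num, tauSq_of_two_le (by norm_num) (by omega)]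
      field_simp
  by_cases hin2 : i = (n : ℤ) - 2
  · subst hin2
    rw [hY.node_last u (by omega), show (n : ℤ) - 2 + 1 = n - 1 by ring, tauSq_top,
      show (n : ℤ) - 2 - 1 = n - 3 by ring, tauSq_of_two_le (by omega) (by omega), one_mul]
  · rw [hY.node_mid i u (by omega) (by omega), tauSq_of_two_le (by omega) (by omega),
      tauSq_of_two_le (by omega) (by omega), mul_comm]

theorem tau_mul_eq (hY : IsRSGYSystem n Y) (hn : 4 ≤ n) (hT : IsTSystem T)
    (htop : ∀ u, T (n - 1) u = 1)
    (hnext : ∀ u, T (n - 2) (u - 1) * T (n - 2) (u + 1) = 1 + (Y (n - 2) u)⁻¹) :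
    (∀ i, 2 ≤ i → i ≤ (n : ℤ) - 2 → ∀ u, T i (u - 1) * T i (u + 1) = 1 + (Y i u)⁻¹) ∧
      ∀ u, T 1 (u - 1) * T 1 (u + 1) = (1 + Y 1 u)⁻¹ := by
  have hsq := hT.mul_eq_of_Y_system (fun u => by simp [htop, tauSq_top])
    (fun u => (hnext u).trans (tauSq_of_two_le (by omega) le_rfl).symm)
    (fun i u hi hin => ?_) (fun i u => tauSq_of_two_le) (hY.Y_mul_Y_eq hn)
  · exact ⟨fun i hi hin u => (hsq i (by omega) (by omega) u).trans (tauSq_of_two_le hi hin),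
      fun u => (hsq 1 le_rfl (by omega) u).trans (tauSq_one (by omega))⟩
  · rcases eq_or_lt_of_le hin with rfl | hlt
    · simp [show (n : ℤ) - 2 + 1 = n - 1 by ring, tauSq_top]
    · have := hY.pos (i + 1) u (by omega) (by omega)
      rw [tauSq_of_two_le (by omega) (by omega)]
      positivity

theorem tau_ne_zero (hY : IsRSGYSystem n Y) (hn : 3 ≤ n) (hT : IsTSystem T)
    (hmid : ∀ i, 2 ≤ i → i ≤ (n : ℤ) - 2 → ∀ u, T i (u - 1) * T i (u + 1) = 1 + (Y i u)⁻¹)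
    (hone : ∀ u, T 1 (u - 1) * T 1 (u + 1) = (1 + Y 1 u)⁻¹)
    (i v : ℤ) (hi : 0 ≤ i) (hin : i ≤ (n : ℤ) - 2) : T i v ≠ 0 := by
  rcases (show i = 0 ∨ i = 1 ∨ 2 ≤ i by omega) with rfl | rfl | hi2
  · have hy := hY.pos 1 v le_rfl (by omega)
    have h := hT 1 v
    norm_num at h
    refine left_ne_zero_of_mul (b := T 2 v) ?_
    rw [show T 0 v * T 2 v = (1 + Y 1 v)⁻¹ - 1 by linarith [hone v], sub_ne_zero, Ne, inv_eq_one]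
    linarith
  · have hy := hY.pos 1 (v + 1) le_rfl (by omega)
    have h := hone (v + 1)
    rw [add_sub_cancel_right] at h
    exact left_ne_zero_of_mul (by rw [h]; positivity)
  · have hy := hY.pos i (v + 1) (by omega) hin
    have h := hmid i hi2 hin (v + 1)
    rw [add_sub_cancel_right] at h
    exact left_ne_zero_of_mul (by rw [h]; positivity)

theorem tau_zero_mul_tau_zero (hY : IsRSGYSystem n Y) (hn : 4 ≤ n) (hT : IsTSystem T)
    (htop : ∀ u, T (n - 1) u = 1)
    (hmid : ∀ i, 2 ≤ i → i ≤ (n : ℤ) - 2 → ∀ u, T i (u - 1) * T i (u + 1) = 1 + (Y i u)⁻¹)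
    (hone : ∀ u, T 1 (u - 1) * T 1 (u + 1) = (1 + Y 1 u)⁻¹) (u : ℤ) :
    T 0 (u - n + 1) * T 0 (u + n - 1) = T 1 (u - n) * T 1 (u + n) := by
  have hne := hY.tau_ne_zero (by omega) hT hmid hone
  have hcr (i v : ℤ) (hi : 2 ≤ i) (hin : i ≤ (n : ℤ) - 2) : crossRatio T i v = 1 + Y i v :=
    hT.crossRatio_eq_one_add (hY.pos i v (by omega) hin).ne' (hmid i hi hin v)
  have hcr1 (v : ℤ) : crossRatio T 1 v = -(Y 1 v)⁻¹ := by
    have hy := hY.pos 1 v le_rfl (by omega)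
    exact hT.crossRatio_eq_neg_inv hy.ne' (by positivity) (hone v)
  have htel := prod_crossRatio (N := n) (a := 1) u htop (by omega)
    (fun i v hi hin => hne i v (by omega) hin)
  have hIcc : Icc (1 : ℤ) (n - 2) = insert 1 (Icc 2 ((n : ℤ) - 2)) := by
    ext; simp only [mem_Icc, mem_insert]; omega
  rw [hIcc, prod_insert (by simp), prod_congr rfl (fun i hi => by
    rw [hcr i _ (mem_Icc.1 hi).1 (mem_Icc.1 hi).2, hcr i _ (mem_Icc.1 hi).1 (mem_Icc.1 hi).2]),
    hcr1, hcr1] at htel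
  -- `node_one` says that the whole product equals `T (n - 2) (u - 1) * T (n - 2) (u + 1)`,
  -- so the boundary factor left by the telescoping is `1`
  have hq := hmid (n - 2) (by omega) le_rfl u
  have hy := hY.pos (n - 2) u (by omega) le_rfl
  have hy1 := hY.pos 1 (u - n + 1) le_rfl (by omega)
  have hy2 := hY.pos 1 (u + n - 1) le_rfl (by omega)
  have hh := hY.node_one u
  rw [show u - ((n : ℤ) - 1) = u - n + 1 by ring, show u + ((n : ℤ) - 1) = u + n - 1 by ring,
    eq_div_iff (by positivity), ← hq] at hh
  rw [← hh, show (1 : ℤ) - 1 = 0 by norm_num, show u - n + 1 - 1 = u - n by ring,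
    show u + n - 1 + 1 = u + n by ring] at htel
  have := hne 0 (u - n + 1) le_rfl (by omega)
  have := hne 0 (u + n - 1) le_rfl (by omega)
  have := hne (n - 2) (u - 1) (by omega) le_rfl
  have := hne (n - 2) (u + 1) (by omega) le_rfl
  field_simp at htel
  exact htel

end IsRSGYSystem

theorem periodic_of_tau_mul_tau_periodic {n : ℕ} {Y T : ℤ → ℤ → ℝ} (hT : IsTSystem T)
    (hmid : ∀ i, 2 ≤ i → i ≤ (n : ℤ) - 2 → ∀ u, T i (u - 1) * T i (u + 1) = 1 + (Y i u)⁻¹)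
    (hone : ∀ u, T 1 (u - 1) * T 1 (u + 1) = (1 + Y 1 u)⁻¹) {p : ℤ}
    (hper : ∀ i u, T (i - 1) (u + p) * T (i + 1) (u + p) = T (i - 1) u * T (i + 1) u)
    (i u : ℤ) (hi : 1 ≤ i) (hin : i ≤ (n : ℤ) - 2) : Y i (u + p) = Y i u := by
  rcases eq_or_lt_of_le hi with rfl | hi
  · have hY (v : ℤ) : (1 + Y 1 v)⁻¹ = T (1 - 1) v * T (1 + 1) v + 1 :=
      (hone v).symm.trans (hT 1 v)
    have h := hY (u + p)
    rwa [hper, ← hY, inv_inj, add_right_inj] at h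
  · have hY (v : ℤ) : (Y i v)⁻¹ = T (i - 1) v * T (i + 1) v := by
      linarith [hmid i hi hin v, hT i v]
    have h := hY (u + p)
    rwa [hper, ← hY, inv_inj] at h

/-- Periodicity of the reduced sine-Gordon Y-system `𝕐_n(RSG)` (`n ≥ 4`):
if positive reals `Y_i(u)` (`i = 1,…,n-2`, `u ∈ ℤ`) satisfy `𝕐_n(RSG)`,
then `Y_i(u + 4n - 2) = Y_i(u)`. -/
theorem rsg_Y_system_periodicity (n : ℕ) (hn : 4 ≤ n) (Y : ℤ → ℤ → ℝ)
    (hpos : ∀ i u : ℤ, 1 ≤ i → i ≤ (n : ℤ) - 2 → 0 < Y i u)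
    (h1 : ∀ u : ℤ, Y 1 (u - ((n : ℤ) - 1)) * Y 1 (u + ((n : ℤ) - 1)) =
      (∏ j ∈ Finset.Icc (2 : ℤ) ((n : ℤ) - 2),
        (1 + Y j (u - (n : ℤ) + j)) * (1 + Y j (u + (n : ℤ) - j))) /
      (1 + (Y ((n : ℤ) - 2) u)⁻¹))
    (h2 : ∀ u : ℤ, Y 2 (u - 1) * Y 2 (u + 1) =
      if n = 4 then 1 + Y 1 u else (1 + Y 1 u) / (1 + (Y 3 u)⁻¹))
    (h3 : ∀ i u : ℤ, 3 ≤ i → i ≤ (n : ℤ) - 3 → Y i (u - 1) * Y i (u + 1) =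
      1 / ((1 + (Y (i - 1) u)⁻¹) * (1 + (Y (i + 1) u)⁻¹)))
    (h4 : ∀ u : ℤ, 5 ≤ n → Y ((n : ℤ) - 2) (u - 1) * Y ((n : ℤ) - 2) (u + 1) =
      1 / (1 + (Y ((n : ℤ) - 3) u)⁻¹)) :
    ∀ i u : ℤ, 1 ≤ i → i ≤ (n : ℤ) - 2 → Y i (u + (4 * (n : ℤ) - 2)) = Y i u := by
  have hY : IsRSGYSystem n Y := ⟨hpos, h1, h2, h3, h4⟩
  obtain ⟨t, ht⟩ := exists_mul_shift_eq fun u =>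
    Units.mk0 (1 + (Y (n - 2) u)⁻¹) (by have := hpos (n - 2) u (by omega) le_rfl; positivity)
  obtain ⟨V, hV, hVt⟩ := exists_wedge_add_two_eq_one fun u => (t u : ℝ)
  have hT := isTSystem_tau hV n
  have htop := tau_sub_one hV n
  have hnext (u : ℤ) :
      tau V n (n - 2) (u - 1) * tau V n (n - 2) (u + 1) = 1 + (Y (n - 2) u)⁻¹ := by
    rw [tau_sub_two, tau_sub_two, hVt, hVt]
    simpa using congrArg Units.val (ht u)
  obtain ⟨hmid, hone⟩ := hY.tau_mul_eq hn hT htop hnext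
  have hzero (σ : ℤ) : wedge (V σ) (V (σ + (4 * n - 2))) = 0 := by
    obtain ⟨u, rfl⟩ : ∃ u, σ = u - 2 * n + 1 := ⟨σ + 2 * n - 1, by ring⟩
    rw [show u - 2 * n + 1 + (4 * n - 2) = u + 2 * n - 1 by ring, wedge_eq_tau_zero_mul_sub hV,
      hY.tau_zero_mul_tau_zero hn hT htop hmid hone, sub_self]
  exact periodic_of_tau_mul_tau_periodic hT hmid hone (tau_mul_tau_add_period hV hzero n)
end

section
/- For n = 4, if positive real sequences Y_1(u), Y_2(u) (u ∈ ℤ) satisfy Y_1(u-3)Y_1(u+3) = (1+Y_2(u-2))(1+Y_2(u+2))/(1+Y_2(u)^{-1}) and Y_2(u-1)Y_2(u+1) = 1+Y_1(u), then both sequences are periodic in u with period 14: Y_i(u+14) = Y_i(u). -/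
/-!
Put `b m = Y₂ (u + 2 m)`. The two equations combine into a fourth-order recurrence
`RsgRelation (b m) … (b (m + 4))`, which is invariant under reversing its five arguments.
Eliminating `b (m + 1)` from two consecutive instances expresses `b m` as a rational function
`rsgBackward (b (m + 2)) … (b (m + 5))`, and this function is itself invariant under reversing its
arguments. Applied to the reversed sequence, the same elimination gives
`b (m + 7) = rsgBackward (b (m + 5)) … (b (m + 2))`, hence `b (m + 7) = b m`.
Periodicity of `Y₁` follows from `Y₁ u = Y₂ (u - 1) Y₂ (u + 1) - 1`.
-/

section Field

variable {K : Type*} [Field K]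

def RsgRelation (x₀ x₁ x₂ x₃ x₄ : K) : Prop :=
  (x₀ * x₁ - 1) * (x₃ * x₄ - 1) * (1 + x₂) = x₂ * (1 + x₁) * (1 + x₃)

theorem RsgRelation.reverse {x₀ x₁ x₂ x₃ x₄ : K} (h : RsgRelation x₀ x₁ x₂ x₃ x₄) :
    RsgRelation x₄ x₃ x₂ x₁ x₀ := by
  unfold RsgRelation at *
  linear_combination h

def rsgBackward (x₂ x₃ x₄ x₅ : K) : K :=
  x₂ * x₃ * x₄ * x₅ * (1 + x₃) * (1 + x₄) /
    ((x₃ * x₄ - 1) * (x₃ * x₄ - 1 + x₂ * x₃ * (1 + x₄) + x₄ * x₅ * (1 + x₃)))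

theorem rsgBackward_reverse (x₂ x₃ x₄ x₅ : K) :
    rsgBackward x₅ x₄ x₃ x₂ = rsgBackward x₂ x₃ x₄ x₅ := by
  unfold rsgBackward
  ring

theorem eq_rsgBackward {x₀ x₁ x₂ x₃ x₄ x₅ : K}
    (h₀ : RsgRelation x₀ x₁ x₂ x₃ x₄) (h₁ : RsgRelation x₁ x₂ x₃ x₄ x₅)
    (hx₁ : x₁ ≠ 0) (hx₂ : 1 + x₂ ≠ 0)
    (hden : (x₃ * x₄ - 1) * (x₃ * x₄ - 1 + x₂ * x₃ * (1 + x₄) + x₄ * x₅ * (1 + x₃)) ≠ 0) :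
    x₀ = rsgBackward x₂ x₃ x₄ x₅ := by
  unfold RsgRelation at h₀ h₁
  rw [rsgBackward, eq_div_iff hden]
  have key : x₁ * (1 + x₂) * (x₀ * ((x₃ * x₄ - 1) *
        (x₃ * x₄ - 1 + x₂ * x₃ * (1 + x₄) + x₄ * x₅ * (1 + x₃))) -
      x₂ * x₃ * x₄ * x₅ * (1 + x₃) * (1 + x₄)) = 0 := by
    linear_combination (x₃ * x₄ - 1 + x₂ * x₃ * (1 + x₄) + x₄ * x₅ * (1 + x₃)) * h₀ -
      (x₃ * x₄ - 1 + x₂ * x₃ * (1 + x₄)) * h₁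
  exact sub_eq_zero.mp ((mul_eq_zero.mp key).resolve_left (mul_ne_zero hx₁ hx₂))

theorem rsgRelation_of_Y_system {a a' y₀ y₁ y₂ y₃ y₄ : K} (hy₂ : y₂ ≠ 0) (hy₂' : y₂ + 1 ≠ 0)
    (h : a * a' = (1 + y₁) * (1 + y₃) / (1 + y₂⁻¹))
    (h₀₁ : y₀ * y₁ = 1 + a) (h₃₄ : y₃ * y₄ = 1 + a') :
    RsgRelation y₀ y₁ y₂ y₃ y₄ := by
  unfold RsgRelation
  rw [h₀₁, h₃₄]
  field_simp at h
  linear_combination h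

end Field

theorem periodic_of_rsgRelation {K : Type*} [Field K] [LinearOrder K] [IsStrictOrderedRing K]
    (b : ℤ → K) (hpos : ∀ m, 0 < b m) (hgt : ∀ m, 1 < b m * b (m + 1))
    (hrel : ∀ m, RsgRelation (b m) (b (m + 1)) (b (m + 2)) (b (m + 3)) (b (m + 4))) :
    Function.Periodic b 7 := by
  intro m
  have r₁ : RsgRelation (b (m + 1)) (b (m + 2)) (b (m + 3)) (b (m + 4)) (b (m + 5)) := by
    simpa only [add_assoc, Int.reduceAdd] using hrel (m + 1)
  have r₂ : RsgRelation (b (m + 2)) (b (m + 3)) (b (m + 4)) (b (m + 5)) (b (m + 6)) := by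
    simpa only [add_assoc, Int.reduceAdd] using hrel (m + 2)
  have r₃ : RsgRelation (b (m + 3)) (b (m + 4)) (b (m + 5)) (b (m + 6)) (b (m + 7)) := by
    simpa only [add_assoc, Int.reduceAdd] using hrel (m + 3)
  have hden : (b (m + 3) * b (m + 4) - 1) * (b (m + 3) * b (m + 4) - 1 +
      b (m + 2) * b (m + 3) * (1 + b (m + 4)) + b (m + 4) * b (m + 5) * (1 + b (m + 3))) ≠ 0 := by
    have h34 : 0 < b (m + 3) * b (m + 4) - 1 := sub_pos.mpr <| by
      simpa only [add_assoc, Int.reduceAdd] using hgt (m + 3)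
    have := hpos (m + 2); have := hpos (m + 3); have := hpos (m + 4); have := hpos (m + 5)
    exact (mul_pos h34 (by positivity)).ne'
  have hback : b m = rsgBackward (b (m + 2)) (b (m + 3)) (b (m + 4)) (b (m + 5)) :=
    eq_rsgBackward (hrel m) r₁ (hpos _).ne' (by linarith [hpos (m + 2)]) hden
  have hfwd : b (m + 7) = rsgBackward (b (m + 5)) (b (m + 4)) (b (m + 3)) (b (m + 2)) :=
    eq_rsgBackward r₃.reverse r₂.reverse (hpos _).ne' (by linarith [hpos (m + 5)])
      (by convert hden using 1; ring)
  rw [hfwd, hback, rsgBackward_reverse]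

/-- Periodicity of the reduced sine-Gordon Y-system `𝕐_4(RSG)`:
positive real solutions of
`Y_1(u-3)Y_1(u+3) = (1+Y_2(u-2))(1+Y_2(u+2))/(1+Y_2(u)⁻¹)` and
`Y_2(u-1)Y_2(u+1) = 1+Y_1(u)` are periodic with period `14`. -/
theorem rsg4_Y_system_period_14 (Y₁ Y₂ : ℤ → ℝ)
    (hpos₁ : ∀ u : ℤ, 0 < Y₁ u) (hpos₂ : ∀ u : ℤ, 0 < Y₂ u)
    (h1 : ∀ u : ℤ, Y₁ (u - 3) * Y₁ (u + 3) =
      (1 + Y₂ (u - 2)) * (1 + Y₂ (u + 2)) / (1 + (Y₂ u)⁻¹))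
    (h2 : ∀ u : ℤ, Y₂ (u - 1) * Y₂ (u + 1) = 1 + Y₁ u) :
    ∀ u : ℤ, Y₁ (u + 14) = Y₁ u ∧ Y₂ (u + 14) = Y₂ u := by
  have hgt (v : ℤ) : 1 < Y₂ (v - 1) * Y₂ (v + 1) := by
    rw [h2]
    linarith [hpos₁ v]
  have hrel (v : ℤ) :
      RsgRelation (Y₂ (v - 4)) (Y₂ (v - 2)) (Y₂ v) (Y₂ (v + 2)) (Y₂ (v + 4)) :=
    rsgRelation_of_Y_system (hpos₂ v).ne' (by linarith [hpos₂ v]) (h1 v)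
      (by convert h2 (v - 3) using 3 <;> ring) (by convert h2 (v + 3) using 3 <;> ring)
  have hY₂ : Function.Periodic Y₂ 14 := by
    intro u
    have hb := periodic_of_rsgRelation (fun m => Y₂ (u + 2 * m)) (fun m => hpos₂ _)
      (fun m => (hgt (u + 2 * m + 1)).trans_eq (by congr 2 <;> ring))
      (fun m => by convert hrel (u + 2 * m + 4) using 2 <;> ring) 0
    simpa using hb
  intro u
  refine ⟨?_, hY₂ u⟩
  have e := h2 (u + 14)
  rw [show u + 14 - 1 = u - 1 + 14 by ring, show u + 14 + 1 = u + 1 + 14 by ring, hY₂, hY₂,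
    h2 u] at e
  linarith
end

section
/- If T_i(u) ((i,u) ∈ {1,…,n+1}×ℤ) are invertible elements of a commutative ring satisfying the SG T-system 𝕋_n(SG), and Y_i(u) is defined by Y_i(u) = ∏_{(j,v)} T_j(v)^{G_+(i,u;j,v)} / ∏_{(j,v)} T_j(v)^{G_-(i,u;j,v)} (where G_± are the exponent matrices encoding the right-hand sides of the Y-system), then the family Y_i(u) satisfies the SG Y-system 𝕐_n(SG). -/
/-!
For `j ≥ 2` each T-system relation reads `T_j(u-1) T_j(u+1) = A_j(u) + B_j(u)` with
`Y_j(u) = A_j(u) / B_j(u)`, where `A_j` is the product of `T_1`-values and `B_j` that of the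
neighbours; hence `(1 + Y_j(u)) B_j(u) = T_j(u-1) T_j(u+1) = (1 + Y_j(u)⁻¹) A_j(u)`.
For `i ≥ 2` the Y-relation at `i` then reduces, after cancelling units, to the monomial
identities `∏_{j∼i} A_j(u) = A_i(u-1) A_i(u+1)` (up to the factor
`T_1(u-n+1) T_1(u+n-1) = 1 + Y_1(u)` when `i = 2`) and
`∏_{j∼i} T_j(u-1) T_j(u+1) = B_i(u-1) B_i(u+1)`.
For `i = 1`, the factors `(1 + Y_j)` taken at `(j, u ∓ (n - j))` telescope along these two
diagonals to `T_2(u-n+1) T_2(u+n-1) = Y_1(u-n+1) Y_1(u+n-1)`.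
-/

open Finset

theorem mul_mul_mul_eq_of_mul_eq {M : Type*} [CommMonoid M]
    {a₁ a₂ b₁ b₂ c₁ c₂ : M} (h₁ : a₁ * b₁ = c₁) (h₂ : a₂ * b₂ = c₂) :
    a₁ * a₂ * (b₁ * b₂) = c₁ * c₂ := by
  rw [mul_mul_mul_comm, h₁, h₂]

section

variable {R : Type*} [CommRing R]

theorem val_mul_eq_of_eq_mul_inv {y a b : Rˣ} (h : y = a * b⁻¹) : (y : R) * b = a := by
  rw [← Units.val_mul, h, inv_mul_cancel_right]

theorem one_add_val_mul_eq_of_eq_mul_inv {y a b : Rˣ} (h : y = a * b⁻¹) :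
    (1 + (y : R)) * b = a + b := by
  rw [add_mul, one_mul, val_mul_eq_of_eq_mul_inv h, add_comm]

theorem one_add_val_inv_mul_eq_of_eq_mul_inv {y a b : Rˣ} (h : y = a * b⁻¹) :
    (1 + ((y⁻¹ : Rˣ) : R)) * a = a + b := by
  rw [one_add_val_mul_eq_of_eq_mul_inv (b := a) (a := b) (by rw [h, mul_inv_rev, inv_inv]),
    add_comm]

theorem val_mul_mul_eq_of_eq_mul_inv {ym yp am ap bm bp : Rˣ} (c : Rˣ) {w r : R}
    (hm : ym = am * bm⁻¹) (hp : yp = ap * bp⁻¹) (hw : w * c = bm * bp)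
    (hc : (am : R) * ap = c * r) : ((ym * yp : Rˣ) : R) * w = r := by
  apply c.isUnit.mul_right_cancel
  calc ((ym * yp : Rˣ) : R) * w * c = ((ym : R) * bm) * ((yp : R) * bp) := by
        rw [mul_assoc, hw, Units.val_mul]; ring
    _ = r * c := by
        rw [val_mul_eq_of_eq_mul_inv hm, val_mul_eq_of_eq_mul_inv hp, hc, mul_comm]

theorem prod_Icc_mul_eq_of_telescope {x f : ℤ → R} {g : ℤ → Rˣ} {a b : ℤ} (hab : a ≤ b)
    (hbase : x a * f (a + 1) = f a * g a)
    (hstep : ∀ j, a < j → j ≤ b → x j * (g (j - 1) * f (j + 1)) = f j * g j) :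
    (∏ j ∈ Icc a b, x j) * f (b + 1) = f a * g b := by
  induction b, hab using Int.leInduction with
  | base => simpa using hbase
  | succ b hab ih =>
    have hstep' := hstep (b + 1) (by omega) le_rfl
    rw [add_sub_cancel_right] at hstep'
    rw [← insert_Icc_right_eq_Icc_add_one (by omega), prod_insert (by simp)]
    apply (g b).isUnit.mul_right_cancel
    linear_combination (∏ j ∈ Icc a b, x j) * hstep' +
      (g (b + 1) : R) * ih fun j hj hjb => hstep j hj (by omega)

structure IsSGTSystem (n : ℕ) (T : ℤ → ℤ → Rˣ) : Prop where
  eq_one : ∀ u : ℤ, ((T 1 (u - ((n : ℤ) - 1)) * T 1 (u + ((n : ℤ) - 1)) : Rˣ) : R) =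
    (T 2 u : R) + 1
  eq_two : ∀ u : ℤ, ((T 2 (u - 1) * T 2 (u + 1) : Rˣ) : R) =
    (T 1 (u - ((n : ℤ) - 2)) * T 1 (u + ((n : ℤ) - 2)) : Rˣ) + (T 3 u : R)
  eq_mid : ∀ i u : ℤ, 3 ≤ i → i ≤ (n : ℤ) - 2 →
    ((T i (u - 1) * T i (u + 1) : Rˣ) : R) =
      (T 1 (u - ((n : ℤ) - i)) * T 1 (u + ((n : ℤ) - i)) : Rˣ) +
      ((T (i - 1) u * T (i + 1) u : Rˣ) : R)
  eq_fork : ∀ u : ℤ, ((T ((n : ℤ) - 1) (u - 1) * T ((n : ℤ) - 1) (u + 1) : Rˣ) : R) =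
    (T 1 (u - 1) * T 1 (u + 1) : Rˣ) +
    ((T ((n : ℤ) - 2) u * T (n : ℤ) u * T ((n : ℤ) + 1) u : Rˣ) : R)
  eq_n : ∀ u : ℤ, ((T (n : ℤ) (u - 1) * T (n : ℤ) (u + 1) : Rˣ) : R) =
    (T 1 u : R) + (T ((n : ℤ) - 1) u : R)
  eq_n_add_one : ∀ u : ℤ, ((T ((n : ℤ) + 1) (u - 1) * T ((n : ℤ) + 1) (u + 1) : Rˣ) : R) =
    (T 1 u : R) + (T ((n : ℤ) - 1) u : R)

structure IsSGYOfT (n : ℕ) (T Y : ℤ → ℤ → Rˣ) : Prop where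
  eq_one : ∀ u : ℤ, Y 1 u = T 2 u
  eq_two : ∀ u : ℤ, Y 2 u = T 1 (u - ((n : ℤ) - 2)) * T 1 (u + ((n : ℤ) - 2)) * (T 3 u)⁻¹
  eq_mid : ∀ i u : ℤ, 3 ≤ i → i ≤ (n : ℤ) - 2 → Y i u =
    T 1 (u - ((n : ℤ) - i)) * T 1 (u + ((n : ℤ) - i)) * (T (i - 1) u * T (i + 1) u)⁻¹
  eq_fork : ∀ u : ℤ, Y ((n : ℤ) - 1) u =
    T 1 (u - 1) * T 1 (u + 1) * (T ((n : ℤ) - 2) u * T (n : ℤ) u * T ((n : ℤ) + 1) u)⁻¹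
  eq_n : ∀ u : ℤ, Y (n : ℤ) u = T 1 u * (T ((n : ℤ) - 1) u)⁻¹
  eq_n_add_one : ∀ u : ℤ, Y ((n : ℤ) + 1) u = T 1 u * (T ((n : ℤ) - 1) u)⁻¹

namespace IsSGTSystem

variable {n : ℕ} {T Y : ℤ → ℤ → Rˣ}

theorem one_add_Y_two_mul (hT : IsSGTSystem n T) (hY : IsSGYOfT n T Y) (v : ℤ) :
    (1 + (Y 2 v : R)) * T 3 v = T 2 (v - 1) * T 2 (v + 1) :=
  (one_add_val_mul_eq_of_eq_mul_inv (hY.eq_two v)).trans (hT.eq_two v).symm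

theorem one_add_Y_mid_mul (hT : IsSGTSystem n T) (hY : IsSGYOfT n T Y) (j v : ℤ) (hj : 3 ≤ j)
    (hjn : j ≤ (n : ℤ) - 2) :
    (1 + (Y j v : R)) * (T (j - 1) v * T (j + 1) v) = T j (v - 1) * T j (v + 1) :=
  (one_add_val_mul_eq_of_eq_mul_inv (hY.eq_mid j v hj hjn)).trans (hT.eq_mid j v hj hjn).symm

theorem one_add_Y_fork_mul (hT : IsSGTSystem n T) (hY : IsSGYOfT n T Y) (v : ℤ) :
    (1 + (Y ((n : ℤ) - 1) v : R)) * (T ((n : ℤ) - 2) v * T (n : ℤ) v * T ((n : ℤ) + 1) v) =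
      T ((n : ℤ) - 1) (v - 1) * T ((n : ℤ) - 1) (v + 1) :=
  (one_add_val_mul_eq_of_eq_mul_inv (hY.eq_fork v)).trans (hT.eq_fork v).symm

theorem one_add_Y_n_mul (hT : IsSGTSystem n T) (hY : IsSGYOfT n T Y) (v : ℤ) :
    (1 + (Y (n : ℤ) v : R)) * T ((n : ℤ) - 1) v = T (n : ℤ) (v - 1) * T (n : ℤ) (v + 1) :=
  (one_add_val_mul_eq_of_eq_mul_inv (hY.eq_n v)).trans (hT.eq_n v).symm

theorem one_add_Y_n_add_one_mul (hT : IsSGTSystem n T) (hY : IsSGYOfT n T Y) (v : ℤ) :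
    (1 + (Y ((n : ℤ) + 1) v : R)) * T ((n : ℤ) - 1) v =
      T ((n : ℤ) + 1) (v - 1) * T ((n : ℤ) + 1) (v + 1) :=
  (one_add_val_mul_eq_of_eq_mul_inv (hY.eq_n_add_one v)).trans (hT.eq_n_add_one v).symm

theorem one_add_Y_inv_mul (hT : IsSGTSystem n T) (hY : IsSGYOfT n T Y) (j v : ℤ) (hj : 2 ≤ j)
    (hjn : j ≤ (n : ℤ) - 1) :
    (1 + ((Y j v)⁻¹ : Rˣ)) * (T 1 (v - ((n : ℤ) - j)) * T 1 (v + ((n : ℤ) - j)) : R) =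
      T j (v - 1) * T j (v + 1) := by
  rcases hj.eq_or_lt with rfl | hj
  · exact (one_add_val_inv_mul_eq_of_eq_mul_inv (hY.eq_two v)).trans (hT.eq_two v).symm
  rcases hjn.eq_or_lt with rfl | hjn
  · rw [sub_sub_cancel]
    exact (one_add_val_inv_mul_eq_of_eq_mul_inv (hY.eq_fork v)).trans (hT.eq_fork v).symm
  exact (one_add_val_inv_mul_eq_of_eq_mul_inv (hY.eq_mid j v (by omega) (by omega))).trans
    (hT.eq_mid j v (by omega) (by omega)).symm

theorem one_add_Y_n_inv_mul (hT : IsSGTSystem n T) (hY : IsSGYOfT n T Y) (v : ℤ) :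
    (1 + ((Y (n : ℤ) v)⁻¹ : Rˣ)) * (T 1 v : R) = T (n : ℤ) (v - 1) * T (n : ℤ) (v + 1) :=
  (one_add_val_inv_mul_eq_of_eq_mul_inv (hY.eq_n v)).trans (hT.eq_n v).symm

theorem one_add_Y_n_add_one_inv_mul (hT : IsSGTSystem n T) (hY : IsSGYOfT n T Y) (v : ℤ) :
    (1 + ((Y ((n : ℤ) + 1) v)⁻¹ : Rˣ)) * (T 1 v : R) =
      T ((n : ℤ) + 1) (v - 1) * T ((n : ℤ) + 1) (v + 1) :=
  (one_add_val_inv_mul_eq_of_eq_mul_inv (hY.eq_n_add_one v)).trans (hT.eq_n_add_one v).symm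

theorem prod_one_add_Y_mul (hT : IsSGTSystem n T) (hY : IsSGYOfT n T Y) (hn : 4 ≤ n) (u : ℤ) :
    (∏ j ∈ Icc (2 : ℤ) ((n : ℤ) - 1),
        (1 + (Y j (u - (n : ℤ) + j) : R)) * (1 + (Y j (u + (n : ℤ) - j) : R))) *
      (T (n : ℤ) (u - 1) * T (n : ℤ) (u + 1) *
        (T ((n : ℤ) + 1) (u - 1) * T ((n : ℤ) + 1) (u + 1))) =
    T 2 (u - ((n : ℤ) - 1)) * T 2 (u + ((n : ℤ) - 1)) *
      (T ((n : ℤ) - 1) u * T ((n : ℤ) - 1) u) := by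
  set x : ℤ → R := fun j =>
    (1 + (Y j (u - (n : ℤ) + j) : R)) * (1 + (Y j (u + (n : ℤ) - j) : R))
  -- the outer (`f`) and inner (`g`) neighbours of the two diagonal points `(j, u ∓ (n - j))`
  set f : ℤ → R := fun j => T j (u - (n : ℤ) + j - 1) * T j (u + (n : ℤ) - j + 1)
  set g : ℤ → Rˣ := fun j => T j (u - (n : ℤ) + j + 1) * T j (u + (n : ℤ) - j - 1)
  have hbase : x 2 * f (2 + 1) = f 2 * g 2 := by
    simp only [x, f, g, Units.val_mul]
    linear_combination (norm := ring_nf) mul_mul_mul_eq_of_mul_eq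
      (hT.one_add_Y_two_mul hY (u - n + 2)) (hT.one_add_Y_two_mul hY (u + n - 2))
  have hstep :
      ∀ j, 2 < j → j ≤ (n : ℤ) - 2 → x j * (g (j - 1) * f (j + 1)) = f j * g j := by
    intro j hj hjn
    simp only [x, f, g, Units.val_mul]
    linear_combination (norm := ring_nf) mul_mul_mul_eq_of_mul_eq
      (hT.one_add_Y_mid_mul hY j (u - n + j) (by omega) hjn)
      (hT.one_add_Y_mid_mul hY j (u + n - j) (by omega) hjn)
  have hfork : x ((n : ℤ) - 1) * (g ((n : ℤ) - 2) * (T (n : ℤ) (u - 1) * T (n : ℤ) (u + 1) *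
      (T ((n : ℤ) + 1) (u - 1) * T ((n : ℤ) + 1) (u + 1)))) =
      f ((n : ℤ) - 1) * (T ((n : ℤ) - 1) u * T ((n : ℤ) - 1) u) := by
    simp only [x, f, g, Units.val_mul]
    linear_combination (norm := ring_nf) mul_mul_mul_eq_of_mul_eq
      (hT.one_add_Y_fork_mul hY (u - 1)) (hT.one_add_Y_fork_mul hY (u + 1))
  have htel := prod_Icc_mul_eq_of_telescope (show (2 : ℤ) ≤ n - 2 by omega) hbase hstep
  have hsplit : Icc (2 : ℤ) (n - 1) = insert ((n : ℤ) - 1) (Icc 2 ((n : ℤ) - 2)) := by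
    ext; simp only [mem_Icc, mem_insert]; omega
  rw [show (n : ℤ) - 2 + 1 = n - 1 by ring] at htel
  simp only [f] at htel hfork
  clear_value x g
  rw [hsplit, prod_insert (by simp only [mem_Icc]; omega)]
  apply (g ((n : ℤ) - 2)).isUnit.mul_right_cancel
  linear_combination (norm := ring_nf) (∏ j ∈ Icc 2 ((n : ℤ) - 2), x j) * hfork +
    (T ((n : ℤ) - 1) u * T ((n : ℤ) - 1) u : R) * htel

theorem Y_system_one (hT : IsSGTSystem n T) (hY : IsSGYOfT n T Y) (hn : 4 ≤ n) (u : ℤ) :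
    ((Y 1 (u - ((n : ℤ) - 1)) * Y 1 (u + ((n : ℤ) - 1)) : Rˣ) : R) =
      (∏ j ∈ Icc (2 : ℤ) ((n : ℤ) - 1),
        (1 + (Y j (u - (n : ℤ) + j) : R)) * (1 + (Y j (u + (n : ℤ) - j) : R))) *
      ((1 + (Y (n : ℤ) u : R)) * (1 + (Y ((n : ℤ) + 1) u : R))) := by
  apply (T ((n : ℤ) - 1) u * T ((n : ℤ) - 1) u).isUnit.mul_right_cancel
  rw [hY.eq_one, hY.eq_one]
  push_cast
  rw [← hT.prod_one_add_Y_mul hY hn u, ← hT.one_add_Y_n_mul hY,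
    ← hT.one_add_Y_n_add_one_mul hY]
  ring

theorem Y_system_two (hT : IsSGTSystem n T) (hY : IsSGYOfT n T Y) (hn : 4 ≤ n) (u : ℤ) :
    ((Y 2 (u - 1) * Y 2 (u + 1) : Rˣ) : R) * (1 + ((Y 3 u)⁻¹ : Rˣ)) = 1 + (Y 1 u : R) :=
  val_mul_mul_eq_of_eq_mul_inv (T 1 (u - ((n : ℤ) - 3)) * T 1 (u + ((n : ℤ) - 3)))
    (hY.eq_two _) (hY.eq_two _) (hT.one_add_Y_inv_mul hY 3 u (by norm_num) (by omega))
    (by rw [hY.eq_one, add_comm (1 : R), ← hT.eq_one]; push_cast; ring_nf)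

theorem Y_system_mid (hT : IsSGTSystem n T) (hY : IsSGYOfT n T Y) (i u : ℤ) (hi : 3 ≤ i)
    (hin : i ≤ (n : ℤ) - 2) :
    ((Y i (u - 1) * Y i (u + 1) : Rˣ) : R) *
      ((1 + ((Y (i - 1) u)⁻¹ : Rˣ)) * (1 + ((Y (i + 1) u)⁻¹ : Rˣ))) = 1 :=
  val_mul_mul_eq_of_eq_mul_inv
    (T 1 (u - ((n : ℤ) - (i - 1))) * T 1 (u + ((n : ℤ) - (i - 1))) *
      (T 1 (u - ((n : ℤ) - (i + 1))) * T 1 (u + ((n : ℤ) - (i + 1)))))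
    (hY.eq_mid i _ hi hin) (hY.eq_mid i _ hi hin)
    ((mul_mul_mul_eq_of_mul_eq (hT.one_add_Y_inv_mul hY _ u (by omega) (by omega))
      (hT.one_add_Y_inv_mul hY _ u (by omega) (by omega))).trans (by push_cast; ring))
    (by push_cast; ring_nf)

theorem Y_system_fork (hT : IsSGTSystem n T) (hY : IsSGYOfT n T Y) (hn : 4 ≤ n) (u : ℤ) :
    ((Y ((n : ℤ) - 1) (u - 1) * Y ((n : ℤ) - 1) (u + 1) : Rˣ) : R) *
      ((1 + ((Y ((n : ℤ) - 2) u)⁻¹ : Rˣ)) * (1 + ((Y (n : ℤ) u)⁻¹ : Rˣ)) *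
        (1 + ((Y ((n : ℤ) + 1) u)⁻¹ : Rˣ))) = 1 :=
  val_mul_mul_eq_of_eq_mul_inv
    (T 1 (u - ((n : ℤ) - ((n : ℤ) - 2))) * T 1 (u + ((n : ℤ) - ((n : ℤ) - 2))) *
      T 1 u * T 1 u)
    (hY.eq_fork _) (hY.eq_fork _)
    ((mul_mul_mul_eq_of_mul_eq (mul_mul_mul_eq_of_mul_eq
      (hT.one_add_Y_inv_mul hY _ u (by omega) (by omega)) (hT.one_add_Y_n_inv_mul hY u))
      (hT.one_add_Y_n_add_one_inv_mul hY u)).trans (by push_cast; ring))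
    (by push_cast; ring_nf)

theorem Y_system_n (hT : IsSGTSystem n T) (hY : IsSGYOfT n T Y) (hn : 4 ≤ n) (u : ℤ) :
    ((Y (n : ℤ) (u - 1) * Y (n : ℤ) (u + 1) : Rˣ) : R) *
      (1 + ((Y ((n : ℤ) - 1) u)⁻¹ : Rˣ)) = 1 :=
  val_mul_mul_eq_of_eq_mul_inv
    (T 1 (u - ((n : ℤ) - ((n : ℤ) - 1))) * T 1 (u + ((n : ℤ) - ((n : ℤ) - 1))))
    (hY.eq_n _) (hY.eq_n _) (hT.one_add_Y_inv_mul hY _ u (by omega) le_rfl)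
    (by push_cast; ring_nf)

theorem Y_system_n_add_one (hT : IsSGTSystem n T) (hY : IsSGYOfT n T Y) (hn : 4 ≤ n) (u : ℤ) :
    ((Y ((n : ℤ) + 1) (u - 1) * Y ((n : ℤ) + 1) (u + 1) : Rˣ) : R) *
      (1 + ((Y ((n : ℤ) - 1) u)⁻¹ : Rˣ)) = 1 :=
  val_mul_mul_eq_of_eq_mul_inv
    (T 1 (u - ((n : ℤ) - ((n : ℤ) - 1))) * T 1 (u + ((n : ℤ) - ((n : ℤ) - 1))))
    (hY.eq_n_add_one _) (hY.eq_n_add_one _) (hT.one_add_Y_inv_mul hY _ u (by omega) le_rfl)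
    (by push_cast; ring_nf)

end IsSGTSystem

end

/-- From T-system to Y-system (SG case, `n ≥ 4`).  Suppose the invertible elements
`T_i(u)` of a commutative ring `R` satisfy the SG T-system `𝕋_n(SG)`, and define
`Y_i(u) = ∏_{(j,v)} T_j(v)^{G_+(i,u;j,v)} / ∏_{(j,v)} T_j(v)^{G_-(i,u;j,v)}`, where
`G_±` are the exponent matrices encoding the right-hand sides of the Y-system; written
out explicitly this means
`Y_1(u) = T_2(u)`, `Y_2(u) = T_1(u-n+2)T_1(u+n-2)/T_3(u)`,
`Y_i(u) = T_1(u-n+i)T_1(u+n-i)/(T_{i-1}(u)T_{i+1}(u))` for `3 ≤ i ≤ n-2`,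
`Y_{n-1}(u) = T_1(u-1)T_1(u+1)/(T_{n-2}(u)T_n(u)T_{n+1}(u))`, and
`Y_n(u) = Y_{n+1}(u) = T_1(u)/T_{n-1}(u)`.
Then the family `Y_i(u)` satisfies the SG Y-system `𝕐_n(SG)` (stated with cleared
denominators, all `Y_i(u)` being units of `R`). -/
theorem sg_T_system_to_Y_system {R : Type*} [CommRing R] (n : ℕ) (hn : 4 ≤ n)
    (T Y : ℤ → ℤ → Rˣ)
    -- the SG T-system 𝕋_n(SG)
    (hT1 : ∀ u : ℤ, ((T 1 (u - ((n : ℤ) - 1)) * T 1 (u + ((n : ℤ) - 1)) : Rˣ) : R) =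
      (T 2 u : R) + 1)
    (hT2 : ∀ u : ℤ, ((T 2 (u - 1) * T 2 (u + 1) : Rˣ) : R) =
      (T 1 (u - ((n : ℤ) - 2)) * T 1 (u + ((n : ℤ) - 2)) : Rˣ) + (T 3 u : R))
    (hT3 : ∀ i u : ℤ, 3 ≤ i → i ≤ (n : ℤ) - 2 →
      ((T i (u - 1) * T i (u + 1) : Rˣ) : R) =
        (T 1 (u - ((n : ℤ) - i)) * T 1 (u + ((n : ℤ) - i)) : Rˣ) +
        ((T (i - 1) u * T (i + 1) u : Rˣ) : R))
    (hT4 : ∀ u : ℤ, ((T ((n : ℤ) - 1) (u - 1) * T ((n : ℤ) - 1) (u + 1) : Rˣ) : R) =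
      (T 1 (u - 1) * T 1 (u + 1) : Rˣ) +
      ((T ((n : ℤ) - 2) u * T (n : ℤ) u * T ((n : ℤ) + 1) u : Rˣ) : R))
    (hT5 : ∀ u : ℤ, ((T (n : ℤ) (u - 1) * T (n : ℤ) (u + 1) : Rˣ) : R) =
      (T 1 u : R) + (T ((n : ℤ) - 1) u : R))
    (hT6 : ∀ u : ℤ, ((T ((n : ℤ) + 1) (u - 1) * T ((n : ℤ) + 1) (u + 1) : Rˣ) : R) =
      (T 1 u : R) + (T ((n : ℤ) - 1) u : R))
    -- the definition of Y in terms of T via the exponent matrices G_±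
    (hY1 : ∀ u : ℤ, Y 1 u = T 2 u)
    (hY2 : ∀ u : ℤ, Y 2 u =
      T 1 (u - ((n : ℤ) - 2)) * T 1 (u + ((n : ℤ) - 2)) * (T 3 u)⁻¹)
    (hY3 : ∀ i u : ℤ, 3 ≤ i → i ≤ (n : ℤ) - 2 → Y i u =
      T 1 (u - ((n : ℤ) - i)) * T 1 (u + ((n : ℤ) - i)) * (T (i - 1) u * T (i + 1) u)⁻¹)
    (hY4 : ∀ u : ℤ, Y ((n : ℤ) - 1) u =
      T 1 (u - 1) * T 1 (u + 1) * (T ((n : ℤ) - 2) u * T (n : ℤ) u * T ((n : ℤ) + 1) u)⁻¹)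
    (hY5 : ∀ u : ℤ, Y (n : ℤ) u = T 1 u * (T ((n : ℤ) - 1) u)⁻¹)
    (hY6 : ∀ u : ℤ, Y ((n : ℤ) + 1) u = T 1 u * (T ((n : ℤ) - 1) u)⁻¹) :
    -- the SG Y-system 𝕐_n(SG)
    (∀ u : ℤ, ((Y 1 (u - ((n : ℤ) - 1)) * Y 1 (u + ((n : ℤ) - 1)) : Rˣ) : R) =
      (∏ j ∈ Finset.Icc (2 : ℤ) ((n : ℤ) - 1),
        (1 + (Y j (u - (n : ℤ) + j) : R)) * (1 + (Y j (u + (n : ℤ) - j) : R))) *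
      ((1 + (Y (n : ℤ) u : R)) * (1 + (Y ((n : ℤ) + 1) u : R)))) ∧
    (∀ u : ℤ, ((Y 2 (u - 1) * Y 2 (u + 1) : Rˣ) : R) * (1 + ((Y 3 u)⁻¹ : Rˣ)) =
      1 + (Y 1 u : R)) ∧
    (∀ i u : ℤ, 3 ≤ i → i ≤ (n : ℤ) - 2 →
      ((Y i (u - 1) * Y i (u + 1) : Rˣ) : R) *
        ((1 + ((Y (i - 1) u)⁻¹ : Rˣ)) * (1 + ((Y (i + 1) u)⁻¹ : Rˣ))) = 1) ∧
    (∀ u : ℤ, ((Y ((n : ℤ) - 1) (u - 1) * Y ((n : ℤ) - 1) (u + 1) : Rˣ) : R) *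
      ((1 + ((Y ((n : ℤ) - 2) u)⁻¹ : Rˣ)) * (1 + ((Y (n : ℤ) u)⁻¹ : Rˣ)) *
        (1 + ((Y ((n : ℤ) + 1) u)⁻¹ : Rˣ))) = 1) ∧
    (∀ u : ℤ, ((Y (n : ℤ) (u - 1) * Y (n : ℤ) (u + 1) : Rˣ) : R) *
      (1 + ((Y ((n : ℤ) - 1) u)⁻¹ : Rˣ)) = 1) ∧
    (∀ u : ℤ, ((Y ((n : ℤ) + 1) (u - 1) * Y ((n : ℤ) + 1) (u + 1) : Rˣ) : R) *
      (1 + ((Y ((n : ℤ) - 1) u)⁻¹ : Rˣ)) = 1) := by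
  have hT : IsSGTSystem n T := ⟨hT1, hT2, hT3, hT4, hT5, hT6⟩
  have hY : IsSGYOfT n T Y := ⟨hY1, hY2, hY3, hY4, hY5, hY6⟩
  exact ⟨hT.Y_system_one hY hn, hT.Y_system_two hY hn, hT.Y_system_mid hY,
    hT.Y_system_fork hY hn, hT.Y_system_n hY hn, hT.Y_system_n_add_one hY hn⟩
end
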